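/- arXiv:2406.16923 — 3 statements merged into one kernel-verified Lean document; each statement's English description precedes it below -/
import Mathlib

section
/- Let L be a locally connected complete lattice, and let 𝒮(L) be the poset of separated sets of connected elements, ordered by S₁ ≤ S₂ iff every element of S₁ lies below some element of S₂. Then the map ν : 𝒮(L) → L sending S to ⋁S is an order isomorphism. -/
/-! The components of `x`, i.e. the maximal connected elements below `x`, form a separated set:
two overlapping connected elements have a connected join, so overlapping components coincide.
By Zorn's lemma every connected element below `x` lies in a component, so under local
connectedness the components join to `x`. Comparing separated sets of connected elements
reduces to comparing their joins because a connected element below the join of a separated set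
lies below one of its members. -/

variable {L : Type*} [CompleteLattice L]

def Separated (S : Set L) : Prop :=
  (⊥ : L) ∉ S ∧ ∀ s ∈ S, ∀ t ∈ S, s ≠ t → s ⊓ t = ⊥

def Connected (a : L) : Prop :=
  ∀ S : Set L, Separated S → a ≤ sSup S → ∃ s ∈ S, a ≤ s

def SepConn (S : Set L) : Prop := Separated S ∧ ∀ s ∈ S, Connected s

def SLe (S T : Set L) : Prop := ∀ s ∈ S, ∃ t ∈ T, s ≤ t

theorem Connected.ne_bot {a : L} (ha : Connected a) : a ≠ ⊥ := by
  rintro rfl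
  obtain ⟨s, hs, -⟩ := ha ∅ ⟨by simp, by simp⟩ (by simp)
  exact hs

theorem connected_sSup_of_pairwise {C : Set L} (hne : C.Nonempty)
    (hC : ∀ c ∈ C, Connected c) (hov : C.Pairwise fun c d => c ⊓ d ≠ ⊥) :
    Connected (sSup C) := by
  intro S hS hle
  obtain ⟨c₀, hc₀⟩ := hne
  obtain ⟨s₀, hs₀, hcs₀⟩ := hC c₀ hc₀ S hS ((le_sSup hc₀).trans hle)
  refine ⟨s₀, hs₀, sSup_le fun c hc => ?_⟩
  obtain ⟨s, hs, hcs⟩ := hC c hc S hS ((le_sSup hc).trans hle)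
  obtain rfl | hss₀ := eq_or_ne s s₀
  · exact hcs
  have hdisj : c ⊓ c₀ = ⊥ := le_bot_iff.mp (hS.2 s hs s₀ hs₀ hss₀ ▸ inf_le_inf hcs hcs₀)
  obtain rfl | hcc₀ := eq_or_ne c c₀
  · exact absurd (inf_idem c ▸ hdisj) (hC c hc).ne_bot
  · exact absurd hdisj (hov hc hc₀ hcc₀)

theorem Connected.sup {a b : L} (ha : Connected a) (hb : Connected b) (hab : a ⊓ b ≠ ⊥) :
    Connected (a ⊔ b) := by
  rw [← sSup_pair]
  refine connected_sSup_of_pairwise (Set.insert_nonempty a {b}) (by simp [ha, hb]) ?_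
  rw [Set.pairwise_pair]
  exact fun _ => ⟨hab, inf_comm a b ▸ hab⟩

theorem connected_sSup_of_isChain {C : Set L} (hne : C.Nonempty) (hC : ∀ c ∈ C, Connected c)
    (hchain : IsChain (· ≤ ·) C) : Connected (sSup C) := by
  refine connected_sSup_of_pairwise hne hC fun c hc d hd _ => ?_
  rcases hchain.total hc hd with hcd | hdc
  · rw [inf_eq_left.mpr hcd]; exact (hC c hc).ne_bot
  · rw [inf_eq_right.mpr hdc]; exact (hC d hd).ne_bot

def components (x : L) : Set L := {m | Maximal (fun z => Connected z ∧ z ≤ x) m}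

theorem mem_components {m x : L} :
    m ∈ components x ↔ Maximal (fun z => Connected z ∧ z ≤ x) m := Iff.rfl

theorem sepConn_components (x : L) : SepConn (components x) := by
  refine ⟨⟨fun h => (mem_components.1 h).prop.1.ne_bot rfl, fun m hm n hn hmn => ?_⟩,
    fun m hm => (mem_components.1 hm).prop.1⟩
  rw [mem_components] at hm hn
  by_contra hov
  have hsup : Connected (m ⊔ n) ∧ m ⊔ n ≤ x :=
    ⟨hm.prop.1.sup hn.prop.1 hov, sup_le hm.prop.2 hn.prop.2⟩
  exact hmn ((hm.eq_of_le hsup le_sup_left).trans (hn.eq_of_le hsup le_sup_right).symm)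

theorem exists_mem_components_ge {c x : L} (hc : Connected c) (hcx : c ≤ x) :
    ∃ m ∈ components x, c ≤ m := by
  obtain ⟨m, hcm, hm⟩ := zorn_le_nonempty₀ {z | Connected z ∧ z ≤ x}
    (fun C hCsub hchain d hd =>
      ⟨sSup C, ⟨connected_sSup_of_isChain ⟨d, hd⟩ (fun z hz => (hCsub hz).1) hchain,
        sSup_le fun z hz => (hCsub hz).2⟩, fun _ => le_sSup⟩) c ⟨hc, hcx⟩
  exact ⟨m, hm, hcm⟩

theorem sSup_components (hlc : ∀ x : L, ∃ C : Set L, (∀ c ∈ C, Connected c) ∧ x = sSup C)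
    (x : L) : sSup (components x) = x := by
  refine le_antisymm (sSup_le fun m hm => (mem_components.1 hm).prop.2) ?_
  obtain ⟨C, hC, rfl⟩ := hlc x
  refine sSup_le fun c hc => ?_
  obtain ⟨m, hm, hcm⟩ := exists_mem_components_ge (hC c hc) (le_sSup hc)
  exact hcm.trans (le_sSup hm)

theorem sLe_iff_sSup_le {S T : Set L} (hS : ∀ s ∈ S, Connected s) (hT : Separated T) :
    SLe S T ↔ sSup S ≤ sSup T :=
  ⟨fun h => sSup_le fun s hs => (h s hs).elim fun _ ⟨ht, hst⟩ => hst.trans (le_sSup ht),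
    fun h s hs => hS s hs T hT ((le_sSup hs).trans h)⟩

theorem subset_of_sLe_of_sLe {S T : Set L} (hS : Separated S) (hST : SLe S T) (hTS : SLe T S) :
    S ⊆ T := by
  intro s hs
  obtain ⟨t, ht, hst⟩ := hST s hs
  obtain ⟨s', hs', hts'⟩ := hTS t ht
  obtain rfl : s = s' := by
    by_contra hne
    have hbot : s = ⊥ := inf_eq_left.mpr (hst.trans hts') ▸ hS.2 s hs s' hs' hne
    exact hS.1 (hbot ▸ hs)
  exact le_antisymm hst hts' ▸ ht

theorem nu_is_order_iso
    (hlc : ∀ x : L, ∃ C : Set L, (∀ c ∈ C, Connected c) ∧ x = sSup C) :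
    (∀ S T : Set L, SepConn S → SepConn T → sSup S = sSup T → S = T) ∧
    (∀ x : L, ∃ S : Set L, SepConn S ∧ sSup S = x) ∧
    (∀ S T : Set L, SepConn S → SepConn T → (SLe S T ↔ sSup S ≤ sSup T)) := by
  have hemb : ∀ S T : Set L, SepConn S → SepConn T → (SLe S T ↔ sSup S ≤ sSup T) :=
    fun S T hS hT => sLe_iff_sSup_le hS.2 hT.1
  refine ⟨fun S T hS hT h => ?_, fun x => ⟨components x, sepConn_components x,
    sSup_components hlc x⟩, hemb⟩
  have hST : SLe S T := (hemb S T hS hT).mpr h.le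
  have hTS : SLe T S := (hemb T S hT hS).mpr h.ge
  exact (subset_of_sLe_of_sLe hS.1 hST hTS).antisymm (subset_of_sLe_of_sLe hT.1 hTS hST)
end

section
/- Let Γ be a chainmail and X a down-closed subset of Γ. Then X is the down-set of some totally disconnected subset of Γ if and only if the join of every subset of X that is a mail belongs to X, if and only if X is closed under joins of its mail-connected subsets. -/
/-!
Walking along a path in a mail-connected `C ⊆ X` from a base point `x`, each step joins the
current element with a linked one; every such pair is a mail, so its join stays in `X`. Hence every
element of `C` lies below some `e ∈ X` with `x ≤ e ≤ ⋁ C`, and these `e` form a mail whose join is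
`⋁ C`. For the converse direction, the joins of the mail-connected components of `X` form a
totally disconnected set whose down-set is `X`.
-/

variable {P : Type*} [PartialOrder P]

def Mail (M : Set P) : Prop :=
  M.Nonempty ∧ ∃ b : P, ∀ x ∈ M, b ≤ x

def IsChainmail (P : Type*) [PartialOrder P] : Prop :=
  ∀ M : Set P, Mail M → ∃ j : P, IsLUB M j

def MailConnected (C : Set P) : Prop :=
  C.Nonempty ∧ ∀ c ∈ C, ∀ d ∈ C,
    Relation.ReflTransGen
      (fun x y => x ∈ C ∧ y ∈ C ∧ ∃ b : P, b ≤ x ∧ b ≤ y) c d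

def TotDisc (D : Set P) : Prop :=
  ∀ d ∈ D, ∀ e ∈ D, d ≠ e → ¬ ∃ b : P, b ≤ d ∧ b ≤ e

/-- The order on totally disconnected subsets. -/
def DLe (D₁ D₂ : Set P) : Prop := ∀ d ∈ D₁, ∃ e ∈ D₂, d ≤ e

/-- `MailConnected C` is connectedness under `Linked C`. -/
def Linked (X : Set P) (a b : P) : Prop :=
  a ∈ X ∧ b ∈ X ∧ ∃ c : P, c ≤ a ∧ c ≤ b

def MailJoinClosed (X : Set P) : Prop :=
  ∀ M ⊆ X, Mail M → ∀ j : P, IsLUB M j → j ∈ X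

def IsComponentTop (X : Set P) (s : P) : Prop :=
  s ∈ X ∧ ∀ x, Linked X s x → x ≤ s

theorem Mail.mailConnected {M : Set P} (hM : Mail M) : MailConnected M := by
  obtain ⟨hne, b, hb⟩ := hM
  exact ⟨hne, fun c hc d hd => .single ⟨hc, hd, b, hb c hc, hb d hd⟩⟩

theorem mailJoinClosed_of_forall_mailConnected {X : Set P}
    (hX : ∀ C ⊆ X, MailConnected C → ∀ j : P, IsLUB C j → j ∈ X) : MailJoinClosed X :=
  fun M hMX hM => hX M hMX hM.mailConnected

theorem TotDisc.mailJoinClosed_lowerClosure {D : Set P} (hD : TotDisc D) :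
    MailJoinClosed {y : P | ∃ d ∈ D, y ≤ d} := by
  rintro M hMX ⟨⟨m₀, hm₀⟩, b, hb⟩ j hj
  obtain ⟨d₀, hd₀, hmd₀⟩ := hMX hm₀
  have hle : ∀ m ∈ M, m ≤ d₀ := by
    intro m hm
    obtain ⟨d, hd, hmd⟩ := hMX hm
    obtain rfl | hne := eq_or_ne d d₀
    · exact hmd
    · exact (hD d hd d₀ hd₀ hne ⟨b, (hb m hm).trans hmd, (hb m₀ hm₀).trans hmd₀⟩).elim
  exact ⟨d₀, hd₀, hj.2 hle⟩

section Chainmail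

variable {X : Set P}

theorem MailJoinClosed.exists_isLUB_pair (hΓ : IsChainmail P) (hX : MailJoinClosed X)
    {a b c : P} (ha : a ∈ X) (hb : b ∈ X) (hca : c ≤ a) (hcb : c ≤ b) :
    ∃ f ∈ X, IsLUB {a, b} f := by
  have hM : Mail ({a, b} : Set P) := ⟨⟨a, .inl rfl⟩, c, by rintro x (rfl | rfl) <;> assumption⟩
  obtain ⟨f, hf⟩ := hΓ _ hM
  exact ⟨f, hX _ (Set.insert_subset ha (Set.singleton_subset_iff.2 hb)) hM f hf, hf⟩

theorem MailJoinClosed.exists_isLUB_mem (hΓ : IsChainmail P) (hX : MailJoinClosed X)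
    {C : Set P} (hCX : C ⊆ X) {x : P} (hx : x ∈ C)
    (hpath : ∀ c ∈ C, Relation.ReflTransGen (Linked C) x c) :
    ∃ s ∈ X, IsLUB C s := by
  set E : Set P := {e | e ∈ X ∧ x ≤ e ∧ e ∈ lowerBounds (upperBounds C)}
  have hxE : x ∈ E := ⟨hCX hx, le_rfl, fun u hu => hu hx⟩
  have hE : Mail E := ⟨⟨x, hxE⟩, x, fun e he => he.2.1⟩
  obtain ⟨s, hs⟩ := hΓ E hE
  have hcover : ∀ c ∈ C, ∃ e ∈ E, c ≤ e := by
    intro c hc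
    induction hpath c hc with
    | refl => exact ⟨x, hxE, le_rfl⟩
    | @tail b c _ hbc ih =>
      obtain ⟨e, ⟨heX, hxe, heC⟩, hbe⟩ := ih hbc.1
      obtain ⟨-, hcC, w, hwb, hwc⟩ := hbc
      obtain ⟨f, hfX, hf⟩ := hX.exists_isLUB_pair hΓ heX (hCX hcC) (hwb.trans hbe) hwc
      refine ⟨f, ⟨hfX, hxe.trans (hf.1 (.inl rfl)), fun u hu => hf.2 ?_⟩, hf.1 (.inr rfl)⟩
      rintro y (rfl | rfl)
      exacts [heC hu, hu hcC]
  refine ⟨s, hX E (fun e he => he.1) hE s hs, fun c hc => ?_, fun u hu => hs.2 fun e he => he.2.2 hu⟩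
  obtain ⟨e, he, hce⟩ := hcover c hc
  exact hce.trans (hs.1 he)

theorem MailJoinClosed.isLUB_mem_of_mailConnected (hΓ : IsChainmail P) (hX : MailJoinClosed X)
    {C : Set P} (hCX : C ⊆ X) (hC : MailConnected C) {j : P} (hj : IsLUB C j) : j ∈ X := by
  obtain ⟨⟨x, hx⟩, hpath⟩ := hC
  obtain ⟨s, hsX, hs⟩ := hX.exists_isLUB_mem hΓ hCX hx (hpath x hx)
  rwa [hj.unique hs]

theorem reflTransGen_linked_reachable {z y : P} (h : Relation.ReflTransGen (Linked X) z y) :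
    Relation.ReflTransGen (Linked {w | Relation.ReflTransGen (Linked X) z w}) z y := by
  induction h with
  | refl => exact .refl
  | @tail b c hb hbc ih => exact ih.tail ⟨hb, hb.tail hbc, hbc.2.2⟩

theorem totDisc_setOf_isComponentTop : TotDisc {s | IsComponentTop X s} := by
  rintro s ⟨hsX, hs⟩ t ⟨htX, ht⟩ hne ⟨b, hbs, hbt⟩
  exact hne ((ht s ⟨htX, hsX, b, hbt, hbs⟩).antisymm (hs t ⟨hsX, htX, b, hbs, hbt⟩))

/-- The witness is the join of the mail-connected component of `z` in `X`. -/
theorem MailJoinClosed.exists_isComponentTop_le (hΓ : IsChainmail P) (hX : MailJoinClosed X)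
    {z : P} (hz : z ∈ X) : ∃ s, IsComponentTop X s ∧ z ≤ s := by
  set K : Set P := {w | Relation.ReflTransGen (Linked X) z w}
  have hKX : K ⊆ X := fun w hw => by
    induction hw with
    | refl => exact hz
    | tail _ hbc => exact hbc.2.1
  obtain ⟨s, hsX, hs⟩ := hX.exists_isLUB_mem hΓ hKX (.refl : z ∈ K)
    fun c hc => reflTransGen_linked_reachable hc
  have hzs : z ≤ s := hs.1 .refl
  have hsK : s ∈ K := .single ⟨hz, hsX, z, le_rfl, hzs⟩
  exact ⟨s, ⟨hsX, fun x hsx => hs.1 (hsK.tail hsx)⟩, hzs⟩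

theorem MailJoinClosed.exists_totDisc_lowerClosure_eq (hΓ : IsChainmail P)
    (hdown : ∀ x ∈ X, ∀ y : P, y ≤ x → y ∈ X) (hX : MailJoinClosed X) :
    ∃ D : Set P, TotDisc D ∧ X = {y : P | ∃ d ∈ D, y ≤ d} := by
  refine ⟨{s | IsComponentTop X s}, totDisc_setOf_isComponentTop, Set.ext fun z => ⟨?_, ?_⟩⟩
  · exact hX.exists_isComponentTop_le hΓ
  · rintro ⟨s, ⟨hsX, -⟩, hzs⟩
    exact hdown s hsX z hzs

end Chainmail

theorem subchainmail_characterization (hΓ : IsChainmail P)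
    (X : Set P) (hdown : ∀ x ∈ X, ∀ y : P, y ≤ x → y ∈ X) :
    ((∃ D : Set P, TotDisc D ∧ X = {y : P | ∃ d ∈ D, y ≤ d}) ↔
      (∀ M ⊆ X, Mail M → ∀ j : P, IsLUB M j → j ∈ X)) ∧
    ((∀ M ⊆ X, Mail M → ∀ j : P, IsLUB M j → j ∈ X) ↔
      (∀ C ⊆ X, MailConnected C → ∀ j : P, IsLUB C j → j ∈ X)) := by
  refine ⟨⟨?_, MailJoinClosed.exists_totDisc_lowerClosure_eq hΓ hdown⟩,
    ⟨fun hX C hCX hC _ hj => MailJoinClosed.isLUB_mem_of_mailConnected hΓ hX hCX hC hj,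
      mailJoinClosed_of_forall_mailConnected⟩⟩
  rintro ⟨D, hD, rfl⟩
  exact hD.mailJoinClosed_lowerClosure
end

section
/- For any chainmail Γ, the connected elements of the complete lattice 𝒟(Γ) are exactly the singletons {x} for x ∈ Γ; consequently 𝒟(Γ) is locally connected, and the map x ↦ {x} is an order isomorphism from Γ onto the poset of connected elements of 𝒟(Γ). -/
variable {P : Type*} [PartialOrder P]

def SeparatedD (S : Set (Set P)) : Prop :=
  (∅ : Set P) ∉ S ∧ ∀ D₁ ∈ S, ∀ D₂ ∈ S, D₁ ≠ D₂ →
    ∀ E : Set P, TotDisc E → DLe E D₁ → DLe E D₂ → E = ∅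

def IsLUBD (S : Set (Set P)) (J : Set P) : Prop :=
  (∀ D ∈ S, DLe D J) ∧ ∀ U : Set P, TotDisc U → (∀ D ∈ S, DLe D U) → DLe J U

/-- Connectedness (condition (E4)) in the complete lattice of totally
disconnected subsets. -/
def ConnectedD (D : Set P) : Prop :=
  ∀ S : Set (Set P), (∀ E ∈ S, TotDisc E) → SeparatedD S →
    ∀ J : Set P, TotDisc J → IsLUBD S J → DLe D J → ∃ E ∈ S, DLe D E

/-!
The union of a separated family of totally disconnected sets is again totally disconnected, so it
bounds the family and hence lies above its join; a singleton below the join therefore lies below a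
single member, i.e. singletons are connected. Conversely, a totally disconnected `D` is the join of
the separated family of its singletons, so if `D` is connected it lies below one of them, `{d}`,
and total disconnectedness forces `D = {d}`.
-/

theorem totDisc_singleton (x : P) : TotDisc ({x} : Set P) := by
  rintro d rfl e rfl hne
  exact (hne rfl).elim

theorem dLe_refl (D : Set P) : DLe D D :=
  fun d hd => ⟨d, hd, le_rfl⟩

theorem singleton_dLe_iff {x : P} {D : Set P} : DLe {x} D ↔ ∃ e ∈ D, x ≤ e := by
  simp [DLe]

theorem dLe_singleton_iff {D : Set P} {y : P} : DLe D {y} ↔ ∀ d ∈ D, d ≤ y := by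
  simp [DLe]

theorem dLe_sUnion {S : Set (Set P)} {D : Set P} (hD : D ∈ S) : DLe D (⋃₀ S) :=
  fun d hd => ⟨d, ⟨D, hD, hd⟩, le_rfl⟩

/-- A common lower bound `b` of elements of two different members would make `{b}` a nonempty
common lower bound of those members. -/
theorem SeparatedD.totDisc_sUnion {S : Set (Set P)} (hsep : SeparatedD S)
    (hS : ∀ E ∈ S, TotDisc E) : TotDisc (⋃₀ S) := by
  rintro d ⟨E₁, hE₁, hd⟩ e ⟨E₂, hE₂, he⟩ hne ⟨b, hbd, hbe⟩
  by_cases hE : E₁ = E₂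
  · subst hE
    exact hS E₁ hE₁ d hd e he hne ⟨b, hbd, hbe⟩
  · refine Set.singleton_ne_empty b (hsep.2 E₁ hE₁ E₂ hE₂ hE {b} (totDisc_singleton b) ?_ ?_)
    · rintro _ rfl
      exact ⟨d, hd, hbd⟩
    · rintro _ rfl
      exact ⟨e, he, hbe⟩

theorem connectedD_singleton (x : P) : ConnectedD ({x} : Set P) := by
  intro S hS hsep J _ hJ hxJ
  obtain ⟨j, hj, hxj⟩ := singleton_dLe_iff.1 hxJ
  obtain ⟨u, ⟨E, hE, hu⟩, hju⟩ :=
    hJ.2 (⋃₀ S) (hsep.totDisc_sUnion hS) (fun _ => dLe_sUnion) j hj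
  exact ⟨E, hE, singleton_dLe_iff.2 ⟨u, hu, hxj.trans hju⟩⟩

theorem isLUBD_image_singleton (D : Set P) : IsLUBD ((fun d => ({d} : Set P)) '' D) D := by
  refine ⟨?_, fun U _ hU d hd => hU {d} ⟨d, hd, rfl⟩ d rfl⟩
  rintro _ ⟨d, hd, rfl⟩
  exact singleton_dLe_iff.2 ⟨d, hd, le_rfl⟩

theorem TotDisc.separatedD_image_singleton {D : Set P} (hD : TotDisc D) :
    SeparatedD ((fun d => ({d} : Set P)) '' D) := by
  refine ⟨fun ⟨d, _, hd⟩ => Set.singleton_ne_empty d hd, ?_⟩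
  rintro _ ⟨d₁, hd₁, rfl⟩ _ ⟨d₂, hd₂, rfl⟩ hne E _ h₁ h₂
  exact Set.eq_empty_of_forall_notMem fun e he => hD d₁ hd₁ d₂ hd₂ (fun h => hne (h ▸ rfl))
    ⟨e, dLe_singleton_iff.1 h₁ e he, dLe_singleton_iff.1 h₂ e he⟩

theorem TotDisc.eq_singleton_of_dLe {D : Set P} (hD : TotDisc D) {d : P} (hd : d ∈ D)
    (hDd : DLe D {d}) : D = {d} := by
  refine Set.eq_singleton_iff_unique_mem.2 ⟨hd, fun e he => ?_⟩
  by_contra hne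
  exact hD e he d hd hne ⟨e, le_rfl, dLe_singleton_iff.1 hDd e he⟩

theorem TotDisc.exists_eq_singleton_of_connectedD {D : Set P} (hD : TotDisc D)
    (hC : ConnectedD D) : ∃ x : P, D = {x} := by
  obtain ⟨_, ⟨d, hd, rfl⟩, hDd⟩ :=
    hC _ (by rintro _ ⟨d, -, rfl⟩; exact totDisc_singleton d) hD.separatedD_image_singleton
      D hD (isLUBD_image_singleton D) (dLe_refl D)
  exact ⟨d, hD.eq_singleton_of_dLe hd hDd⟩

theorem totDisc_lattice_locally_connected_general :
    (∀ x : P, TotDisc {x} ∧ ConnectedD ({x} : Set P)) ∧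
    (∀ D : Set P, TotDisc D → ConnectedD D → ∃ x : P, D = {x}) ∧
    (∀ D : Set P, TotDisc D →
      ∃ S : Set (Set P), (∀ E ∈ S, TotDisc E ∧ ConnectedD E) ∧ IsLUBD S D) ∧
    (Function.Injective (fun x : P => ({x} : Set P))) ∧
    (∀ x y : P, x ≤ y ↔ DLe ({x} : Set P) {y}) := by
  refine ⟨fun x => ⟨totDisc_singleton x, connectedD_singleton x⟩,
    fun D hD hC => hD.exists_eq_singleton_of_connectedD hC, fun D _ => ?_,
    Set.singleton_injective, fun x y => by simp [dLe_singleton_iff]⟩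
  refine ⟨_, ?_, isLUBD_image_singleton D⟩
  rintro _ ⟨d, -, rfl⟩
  exact ⟨totDisc_singleton d, connectedD_singleton d⟩

theorem totDisc_lattice_locally_connected (hΓ : IsChainmail P) :
    (∀ x : P, TotDisc {x} ∧ ConnectedD ({x} : Set P)) ∧
    (∀ D : Set P, TotDisc D → ConnectedD D → ∃ x : P, D = {x}) ∧
    (∀ D : Set P, TotDisc D →
      ∃ S : Set (Set P), (∀ E ∈ S, TotDisc E ∧ ConnectedD E) ∧ IsLUBD S D) ∧
    (Function.Injective (fun x : P => ({x} : Set P))) ∧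
    (∀ x y : P, x ≤ y ↔ DLe ({x} : Set P) {y}) :=
  totDisc_lattice_locally_connected_general
end
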